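/- Exact quadratic identity for the unnormalized KL up to second order: for probability densities p_s, p_t > 0 and a positive estimator r̂ with r = p_s/p_t, D̃_KL[p_s‖r̂·p_t] = (1/2)∫ (p_s(x) − r̂(x)p_t(x))²/p_s(x) dx + R, where D̃_KL[p‖q] = ∫p ln(p/q) − ∫p + ∫q and |R| ≤ C·∫ p_s(x)|r̂(x)/r(x) − 1|³ dx whenever r̂/r is bounded within [1−δ, 1+δ] for 0 < δ < 1, with C depending only on δ. -/

import Mathlib

open MeasureTheory Real

/-!
With `u = r̂ / r = r̂ p_t / p_s`, the integrand of `D̃_KL[p_s ‖ r̂ p_t] - ½ D_PE` (after using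
`∫ p_s = 1`) is `p_s (u - 1 - log u - (u - 1)² / 2)`. The bracket is the remainder of the
second-order Taylor expansion of `log` at `1`, bounded by `|u - 1|³ / (1 - δ)` when
`|u - 1| ≤ δ < 1`; integrating gives the claim with `C = 1 / (1 - δ)`.
-/

lemma abs_sub_one_sub_log_sub_sq_le {u δ : ℝ} (hδ : δ < 1) (hu : |u - 1| ≤ δ) :
    |u - 1 - log u - (u - 1) ^ 2 / 2| ≤ |u - 1| ^ 3 / (1 - δ) := by
  rw [abs_sub_comm] at hu
  have htaylor := abs_log_sub_add_sum_range_le (hu.trans_lt hδ) 2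
  norm_num [Finset.sum_range_succ] at htaylor
  calc |u - 1 - log u - (u - 1) ^ 2 / 2|
      = |1 - u + (1 - u) ^ 2 / 2 + log u| := by rw [← abs_neg]; ring_nf
    _ ≤ |1 - u| ^ 3 / (1 - |1 - u|) := htaylor
    _ ≤ |u - 1| ^ 3 / (1 - δ) := by
        rw [abs_sub_comm u 1]
        exact div_le_div_of_nonneg_left (by positivity) (by linarith) (by linarith)

lemma mul_log_div_sub_add_sub_pearson_eq {a v : ℝ} (ha : a ≠ 0) :
    a * log (a / v) - a + v - 1 / 2 * ((a - v) ^ 2 / a) =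
      a * (v / a - 1 - log (v / a) - (v / a - 1) ^ 2 / 2) := by
  rw [← inv_div, log_inv]
  field_simp
  ring

lemma abs_unnormalizedKL_integrand_sub_pearson_le {δ a b c : ℝ} (hδ : δ < 1) (ha : 0 < a)
    (hratio : c / (a / b) ∈ Set.Icc (1 - δ) (1 + δ)) :
    |a * log (a / (c * b)) - a + c * b - 1 / 2 * ((a - c * b) ^ 2 / a)| ≤
      1 / (1 - δ) * (a * |c / (a / b) - 1| ^ 3) := by
  rw [div_div_eq_mul_div] at hratio ⊢
  have hu : |c * b / a - 1| ≤ δ := abs_le.2 ⟨by linarith [hratio.1], by linarith [hratio.2]⟩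
  rw [mul_log_div_sub_add_sub_pearson_eq ha.ne', abs_mul, abs_of_pos ha]
  calc a * |c * b / a - 1 - log (c * b / a) - (c * b / a - 1) ^ 2 / 2|
      ≤ a * (|c * b / a - 1| ^ 3 / (1 - δ)) := by
        gcongr; exact abs_sub_one_sub_log_sub_sq_le hδ hu
    _ = 1 / (1 - δ) * (a * |c * b / a - 1| ^ 3) := by ring

theorem unnormalized_kl_quadratic_general {X : Type*} [MeasurableSpace X]
    (δ : ℝ) (hδ1 : δ < 1) :
    ∃ C : ℝ, 0 < C ∧
      ∀ (μ : Measure X) (ps pt rhat : X → ℝ),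
        (∀ x, 0 < ps x) → (∀ x, 0 < pt x) → (∀ x, 0 < rhat x) →
        (∫ x, ps x ∂μ) = 1 → (∫ x, pt x ∂μ) = 1 →
        (∀ x, rhat x / (ps x / pt x) ∈ Set.Icc (1 - δ) (1 + δ)) →
        Integrable (fun x => ps x * Real.log (ps x / (rhat x * pt x))) μ →
        Integrable (fun x => rhat x * pt x) μ →
        Integrable (fun x => (ps x - rhat x * pt x) ^ 2 / ps x) μ →
        Integrable (fun x => ps x * |rhat x / (ps x / pt x) - 1| ^ 3) μ →
        |((∫ x, ps x * Real.log (ps x / (rhat x * pt x)) ∂μ) - 1 +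
            (∫ x, rhat x * pt x ∂μ)) -
          (1 / 2) * ∫ x, (ps x - rhat x * pt x) ^ 2 / ps x ∂μ| ≤
          C * ∫ x, ps x * |rhat x / (ps x / pt x) - 1| ^ 3 ∂μ := by
  have h1δ : 0 < 1 - δ := by linarith
  refine ⟨1 / (1 - δ), by positivity, ?_⟩
  intro μ ps pt rhat hps _ _ hps_one _ hratio hlog hq hpearson hcube
  have hps_int : Integrable ps μ := integrable_of_integral_eq_one hps_one
  have hlog_sub : Integrable (fun x => ps x * log (ps x / (rhat x * pt x)) - ps x) μ :=
    hlog.sub hps_int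
  have hkl : Integrable
      (fun x => ps x * log (ps x / (rhat x * pt x)) - ps x + rhat x * pt x) μ :=
    hlog_sub.add hq
  have hsplit : ((∫ x, ps x * log (ps x / (rhat x * pt x)) ∂μ) - 1 + ∫ x, rhat x * pt x ∂μ) -
      1 / 2 * ∫ x, (ps x - rhat x * pt x) ^ 2 / ps x ∂μ =
      ∫ x, ps x * log (ps x / (rhat x * pt x)) - ps x + rhat x * pt x -
        1 / 2 * ((ps x - rhat x * pt x) ^ 2 / ps x) ∂μ := by
    rw [integral_sub hkl (hpearson.const_mul _), integral_add hlog_sub hq,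
      integral_sub hlog hps_int, integral_const_mul, hps_one]
  rw [hsplit, ← integral_const_mul, ← Real.norm_eq_abs]
  refine norm_integral_le_of_norm_le (hcube.const_mul _) (.of_forall fun x => ?_)
  rw [Real.norm_eq_abs]
  exact abs_unnormalizedKL_integrand_sub_pearson_le hδ1 (hps x) (hratio x)

/-- The unnormalized KL divergence equals the Pearson-type quadratic term up to a
cubic remainder, uniformly over estimators with ratio in `[1-δ, 1+δ]`. -/
theorem unnormalized_kl_quadratic {X : Type*} [MeasurableSpace X]
    (δ : ℝ) (hδ : 0 < δ) (hδ1 : δ < 1) :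
    ∃ C : ℝ, 0 < C ∧
      ∀ (μ : Measure X) (ps pt rhat : X → ℝ),
        (∀ x, 0 < ps x) → (∀ x, 0 < pt x) → (∀ x, 0 < rhat x) →
        (∫ x, ps x ∂μ) = 1 → (∫ x, pt x ∂μ) = 1 →
        (∀ x, rhat x / (ps x / pt x) ∈ Set.Icc (1 - δ) (1 + δ)) →
        Integrable (fun x => ps x * Real.log (ps x / (rhat x * pt x))) μ →
        Integrable (fun x => rhat x * pt x) μ →
        Integrable (fun x => (ps x - rhat x * pt x) ^ 2 / ps x) μ →
        Integrable (fun x => ps x * |rhat x / (ps x / pt x) - 1| ^ 3) μ →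
        |((∫ x, ps x * Real.log (ps x / (rhat x * pt x)) ∂μ) - 1 +
            (∫ x, rhat x * pt x ∂μ)) -
          (1 / 2) * ∫ x, (ps x - rhat x * pt x) ^ 2 / ps x ∂μ| ≤
          C * ∫ x, ps x * |rhat x / (ps x / pt x) - 1| ^ 3 ∂μ :=
  unnormalized_kl_quadratic_general δ hδ1
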